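/- If at every position the empirical symbol distribution of a set of strings is uniform over the alphabet, then both the total Shannon entropy Ent_S and the sum of pairwise Hamming distances are simultaneously maximized over all string sets of the same cardinality. -/

import Mathlib

open Finset

/-- Sum over positions of the Shannon entropy of the empirical symbol distribution. -/
noncomputable def entS {α : Type*} [Fintype α] [DecidableEq α] {k L : ℕ}
    (P : Fin k → Fin L → α) : ℝ :=
  ∑ p : Fin L, ∑ e : α,
    Real.negMulLog (((Finset.univ.filter fun m => P m p = e).card : ℝ) / k)

/-- Sum of pairwise Hamming distances of a family of strings. -/
def pairDistSum {α : Type*} [DecidableEq α] {k L : ℕ} (P : Fin k → Fin L → α) : ℕ :=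
  ∑ i : Fin k, ∑ j ∈ Finset.univ.filter (fun j => i < j), hammingDist (P i) (P j)

/-!
Everything happens column by column. If `c e` is the number of strings carrying the symbol `e`
at a given position, the column contributes `∑ e, negMulLog (c e / k)` to `Ent_S`, which is at
most `log A` by Jensen's inequality for the concave function `negMulLog`, with equality when
`c` is constant. Counting ordered pairs of strings, the column contributes
`k ^ 2 - ∑ e, c e ^ 2` to `2 D`, and Cauchy–Schwarz gives `A ∑ e, c e ^ 2 ≥ k ^ 2`, again with
equality when `c` is constant.
-/

lemma sum_negMulLog_le_log_card {α : Type*} [Fintype α] {q : α → ℝ} (h0 : ∀ e, 0 ≤ q e)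
    (h1 : ∑ e, q e = 1) : ∑ e, Real.negMulLog (q e) ≤ Real.log (Fintype.card α) := by
  have hα : Nonempty α := by
    by_contra h
    simp [not_nonempty_iff.1 h] at h1
  set A : ℝ := (Fintype.card α : ℝ)
  have hA : 0 < A := by positivity
  have jensen := Real.concaveOn_negMulLog.le_map_sum (t := univ) (w := fun _ => A⁻¹) (p := q)
    (fun _ _ => by positivity) (by simp [A, hA.ne']) fun e _ => Set.mem_Ici.2 (h0 e)
  simp only [smul_eq_mul, ← mul_sum, h1, mul_one] at jensen
  rw [Real.negMulLog, Real.log_inv] at jensen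
  field_simp at jensen
  linarith

lemma sum_sum_eq_two_nsmul_sum_sum_lt {ι M : Type*} [Fintype ι] [LinearOrder ι]
    [AddCommMonoid M] (f : ι → ι → M) (hf : ∀ i j, f i j = f j i) (hf₀ : ∀ i, f i i = 0) :
    ∑ i, ∑ j, f i j = 2 • ∑ i, ∑ j with i < j, f i j := by
  have hsplit : ∀ i, ∑ j, f i j = ∑ j with i < j, f i j + ∑ j with j < i, f i j := by
    intro i
    rw [← sum_filter_add_sum_filter_not univ (i < ·)]
    congr 1
    simp only [sum_filter]
    refine sum_congr rfl fun j _ => ?_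
    rcases lt_trichotomy i j with h | rfl | h
    · simp [h, h.not_gt]
    · simp [hf₀]
    · simp [h, h.not_gt]
  have hswap : ∑ i, ∑ j with j < i, f i j = ∑ i, ∑ j with i < j, f i j := by
    rw [sum_comm' (t' := univ) (s' := fun j => {i | j < i}) (by simp)]
    simp only [hf]
  rw [sum_congr rfl fun i _ => hsplit i, sum_add_distrib, hswap, two_nsmul]

section Column

variable {ι α : Type*} [Fintype ι] [Fintype α] [DecidableEq α]

def fiberCard (x : ι → α) (e : α) : ℕ := #{m | x m = e}

def mismatchCount (x : ι → α) : ℕ := #{ij : ι × ι | x ij.1 ≠ x ij.2}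

noncomputable def empiricalEntropy (x : ι → α) : ℝ :=
  ∑ e, Real.negMulLog (fiberCard x e / Fintype.card ι)

lemma sum_fiberCard (x : ι → α) : ∑ e, fiberCard x e = Fintype.card ι :=
  (card_eq_sum_card_fiberwise fun _ _ => mem_univ _).symm

lemma card_mul_eq_of_fiberCard_eq {x : ι → α} {c : ℕ} (hx : ∀ e, fiberCard x e = c) :
    Fintype.card α * c = Fintype.card ι := by
  simp [← sum_fiberCard x, hx]

lemma sum_fiberCard_sq (x : ι → α) :
    ∑ e, fiberCard x e ^ 2 = #{ij : ι × ι | x ij.1 = x ij.2} := by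
  rw [card_eq_sum_card_fiberwise (f := fun ij => x ij.1) (t := univ) fun _ _ => mem_univ _]
  refine sum_congr rfl fun e _ => ?_
  rw [sq, fiberCard, ← card_product]
  congr 1
  ext ⟨i, j⟩
  simp only [mem_product, mem_filter, mem_univ, true_and]
  constructor
  · rintro ⟨hi, hj⟩; exact ⟨hi.trans hj.symm, hi⟩
  · rintro ⟨hij, hi⟩; exact ⟨hi, hij.symm.trans hi⟩

lemma mismatchCount_add_sum_fiberCard_sq (x : ι → α) :
    mismatchCount x + ∑ e, fiberCard x e ^ 2 = Fintype.card ι ^ 2 := by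
  rw [sum_fiberCard_sq, mismatchCount, add_comm, card_filter_add_card_filter_not, card_univ,
    Fintype.card_prod, sq]

lemma card_sq_le_card_mul_sum_fiberCard_sq (x : ι → α) :
    Fintype.card ι ^ 2 ≤ Fintype.card α * ∑ e, fiberCard x e ^ 2 := by
  simpa [sum_fiberCard] using sq_sum_le_card_mul_sum_sq (s := univ) (f := fiberCard x)

lemma card_mul_sum_fiberCard_sq_of_fiberCard_eq {x : ι → α} {c : ℕ}
    (hx : ∀ e, fiberCard x e = c) :
    Fintype.card α * ∑ e, fiberCard x e ^ 2 = Fintype.card ι ^ 2 := by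
  simp [hx, ← card_mul_eq_of_fiberCard_eq hx]
  ring

lemma mismatchCount_le_of_fiberCard_eq {x : ι → α} {c : ℕ} (hx : ∀ e, fiberCard x e = c)
    (y : ι → α) : mismatchCount y ≤ mismatchCount x := by
  have hx₁ := mismatchCount_add_sum_fiberCard_sq x
  have hy₁ := mismatchCount_add_sum_fiberCard_sq y
  have hx₂ := card_mul_sum_fiberCard_sq_of_fiberCard_eq hx
  have hy₂ := card_sq_le_card_mul_sum_fiberCard_sq y
  rcases (Fintype.card α).eq_zero_or_pos with hα | hα
  · rw [hα, zero_mul] at hx₂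
    omega
  · have := Nat.le_of_mul_le_mul_left (hx₂.trans_le hy₂) hα
    omega

lemma mismatchCount_eq_of_fiberCard_eq {x : ι → α} {c : ℕ} (hx : ∀ e, fiberCard x e = c) :
    (mismatchCount x : ℝ) = Fintype.card ι ^ 2 * (Fintype.card α - 1) / Fintype.card α := by
  have h₁ := mismatchCount_add_sum_fiberCard_sq x
  have h₂ := card_mul_sum_fiberCard_sq_of_fiberCard_eq hx
  rcases Nat.eq_zero_or_pos (Fintype.card α) with hα | hα
  · rw [hα, zero_mul] at h₂
    simp [hα]
    omega
  · rw [eq_div_iff (by positivity)]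
    have h₁' : (mismatchCount x : ℝ) + ∑ e, (fiberCard x e : ℝ) ^ 2 = Fintype.card ι ^ 2 := by
      exact_mod_cast h₁
    have h₂' : (Fintype.card α : ℝ) * ∑ e, (fiberCard x e : ℝ) ^ 2 = Fintype.card ι ^ 2 := by
      exact_mod_cast h₂
    linear_combination (Fintype.card α : ℝ) * h₁' - h₂'

lemma empiricalEntropy_le_log_card (x : ι → α) :
    empiricalEntropy x ≤ Real.log (Fintype.card α) := by
  rcases isEmpty_or_nonempty ι with hι | hι
  · simpa [empiricalEntropy] using Real.log_natCast_nonneg _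
  · refine sum_negMulLog_le_log_card (fun e => by positivity) ?_
    rw [← sum_div, ← Nat.cast_sum, sum_fiberCard, div_self (by positivity)]

lemma empiricalEntropy_eq_log_card_of_fiberCard_eq [Nonempty ι] {x : ι → α} {c : ℕ}
    (hx : ∀ e, fiberCard x e = c) : empiricalEntropy x = Real.log (Fintype.card α) := by
  have hcard : (Fintype.card α : ℝ) * c = Fintype.card ι := by
    exact_mod_cast card_mul_eq_of_fiberCard_eq hx
  obtain ⟨hα, hc⟩ : (Fintype.card α : ℝ) ≠ 0 ∧ (c : ℝ) ≠ 0 :=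
    mul_ne_zero_iff.1 (hcard ▸ Nat.cast_ne_zero.2 Fintype.card_ne_zero)
  simp only [empiricalEntropy, hx, ← hcard, sum_const, card_univ, nsmul_eq_mul]
  rw [div_mul_cancel_right₀ hc, Real.negMulLog, Real.log_inv]
  field_simp

end Column

lemma sum_sum_hammingDist {ι β α : Type*} [Fintype ι] [Fintype β] [DecidableEq α]
    (Q : ι → β → α) :
    ∑ i, ∑ j, hammingDist (Q i) (Q j) = ∑ p, mismatchCount (Q · p) := by
  simp only [hammingDist, mismatchCount, card_filter]
  rw [← Fintype.sum_prod_type', sum_comm]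

lemma two_mul_pairDistSum {α : Type*} [DecidableEq α] {k L : ℕ} (P : Fin k → Fin L → α) :
    2 * pairDistSum P = ∑ p, mismatchCount (P · p) := by
  rw [← sum_sum_hammingDist, sum_sum_eq_two_nsmul_sum_sum_lt (fun i j => hammingDist (P i) (P j))
    (fun _ _ => hammingDist_comm _ _) fun _ => hammingDist_self _, smul_eq_mul, pairDistSum]

lemma entS_eq_sum_empiricalEntropy {α : Type*} [Fintype α] [DecidableEq α] {k L : ℕ}
    (P : Fin k → Fin L → α) : entS P = ∑ p, empiricalEntropy (P · p) := by
  simp only [entS, empiricalEntropy, fiberCard, Fintype.card_fin]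

theorem uniform_columns_maximize_entropy_and_distance_general {α : Type*} [Fintype α]
    [DecidableEq α] {k L A : ℕ} (hA : A = Fintype.card α) (hk : 0 < k)
    (P : Fin k → Fin L → α)
    (hunif : ∀ p e, (Finset.univ.filter fun m => P m p = e).card = k / A) :
    entS P = (L : ℝ) * Real.log A ∧
    (pairDistSum P : ℝ) = (L : ℝ) * (k : ℝ) ^ 2 * ((A : ℝ) - 1) / (2 * A) ∧
    (∀ Q : Fin k → Fin L → α, entS Q ≤ entS P ∧ pairDistSum Q ≤ pairDistSum P) := by
  subst hA
  have : Nonempty (Fin k) := ⟨⟨0, hk⟩⟩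
  have hP : ∀ p, ∀ e, fiberCard (P · p) e = k / Fintype.card α := hunif
  have hentP : entS P = L * Real.log (Fintype.card α) := by
    simp [entS_eq_sum_empiricalEntropy, empiricalEntropy_eq_log_card_of_fiberCard_eq (hP _)]
  refine ⟨hentP, ?_, fun Q => ⟨?_, ?_⟩⟩
  · have hD := congrArg (Nat.cast (R := ℝ)) (two_mul_pairDistSum P)
    push_cast [mismatchCount_eq_of_fiberCard_eq (hP _)] at hD
    simp only [sum_const, card_univ, Fintype.card_fin, nsmul_eq_mul] at hD
    linear_combination hD / 2
  · rw [hentP, entS_eq_sum_empiricalEntropy]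
    simpa using sum_le_sum (s := univ) fun p _ => empiricalEntropy_le_log_card (Q · p)
  · have := sum_le_sum fun p (_ : p ∈ univ) => mismatchCount_le_of_fiberCard_eq (hP p) (Q · p)
    rw [← two_mul_pairDistSum, ← two_mul_pairDistSum] at this
    omega

/-- If at every position the empirical symbol distribution is uniform (every symbol occurs
`k / A` times, `A = |Σ|`, `A ∣ k`), then `Ent_S(P) = L log A` and
`D(P) = L k² (A−1) / (2A)`, and these are the maximal possible values of `Ent_S` and `D`
among all families of `k` strings. -/
theorem uniform_columns_maximize_entropy_and_distance {α : Type*} [Fintype α]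
    [DecidableEq α] {k L A : ℕ} (hA : A = Fintype.card α) (hk : 0 < k) (hdvd : A ∣ k)
    (P : Fin k → Fin L → α)
    (hunif : ∀ p e, (Finset.univ.filter fun m => P m p = e).card = k / A) :
    entS P = (L : ℝ) * Real.log A ∧
    (pairDistSum P : ℝ) = (L : ℝ) * (k : ℝ) ^ 2 * ((A : ℝ) - 1) / (2 * A) ∧
    (∀ Q : Fin k → Fin L → α, entS Q ≤ entS P ∧ pairDistSum Q ≤ pairDistSum P) :=
  uniform_columns_maximize_entropy_and_distance_general hA hk P hunif
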